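/- There exists a constant d₂ > 0, depending only on Ω, σ, c and q, such that the ball {(A, B) ∈ ℝ² : A² + B² ≤ 2d₂} is an absorbing set for the Maxwell amplitudes: for every solution of the Maxwell–Bloch system with one two-level molecule satisfying the charge constraint |C₁(t)|² + |C₂(t)|² = 1, there exists t₀ ≥ 0 (depending on the initial data) such that A(t)² + B(t)² ≤ 2d₂ for all t ≥ t₀. -/

import Mathlib

/-- The molecular current `j(t) = 2q·Im(conj(C₁(t))·C₂(t))`. -/
noncomputable def mbCurrent (q : ℝ) (C₁ C₂ : ℝ → ℂ) (t : ℝ) : ℝ :=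
  2 * q * ((starRingEnd ℂ) (C₁ t) * C₂ t).im

/-- A solution of the Maxwell–Bloch system with one two-level molecule on `[0,∞)`:
`A' = B`, `B' = -Ω²A - σB + c·j`, `iℏC₁' = ℏω₁C₁ + i·a·C₂`, `iℏC₂' = ℏω₂C₂ - i·a·C₁`,
with `a(t) = (q/c)(A(t) + A_p(t))`. -/
structure IsMBSolution (Ω σ c hbar ω₁ ω₂ q : ℝ) (Ap A B : ℝ → ℝ)
    (C₁ C₂ : ℝ → ℂ) : Prop where
  hA : ∀ t ∈ Set.Ici (0 : ℝ), HasDerivAt A (B t) t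
  hB : ∀ t ∈ Set.Ici (0 : ℝ),
      HasDerivAt B (-Ω ^ 2 * A t - σ * B t + c * mbCurrent q C₁ C₂ t) t
  hC₁ : ∀ t ∈ Set.Ici (0 : ℝ), ∃ d : ℂ, HasDerivAt C₁ d t ∧
      Complex.I * (hbar : ℂ) * d =
        (hbar : ℂ) * (ω₁ : ℂ) * C₁ t
          + Complex.I * ((q / c * (A t + Ap t) : ℝ) : ℂ) * C₂ t
  hC₂ : ∀ t ∈ Set.Ici (0 : ℝ), ∃ d : ℂ, HasDerivAt C₂ d t ∧
      Complex.I * (hbar : ℂ) * d =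
        (hbar : ℂ) * (ω₂ : ℂ) * C₂ t
          - Complex.I * ((q / c * (A t + Ap t) : ℝ) : ℂ) * C₁ t

/-!
The current is bounded, `|j| ≤ |q|`, as soon as `|C₁|² + |C₂|² = 1`, so the Maxwell amplitudes
form a damped oscillator `A'' + σA' + Ω²A = f` driven by a force bounded by `M = |c q|`.
For small `ε > 0` the perturbed energy `V = B² + Ω²A² + εAB` is equivalent to `A² + B²` and
satisfies `V' + αV ≤ β` with `α > 0` and `β` depending only on `Ω, σ, M`; by Grönwall,
`limsup V ≤ β / α`.
-/

open Set Filter Topology Real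

lemma abs_im_conj_mul_le (z w : ℂ) :
    |((starRingEnd ℂ) z * w).im| ≤ (‖z‖ ^ 2 + ‖w‖ ^ 2) / 2 := by
  have him := Complex.abs_im_le_norm ((starRingEnd ℂ) z * w)
  rw [norm_mul, Complex.norm_conj] at him
  nlinarith [sq_nonneg (‖z‖ - ‖w‖)]

lemma abs_mbCurrent_le {q : ℝ} {C₁ C₂ : ℝ → ℂ} {t : ℝ} (h : ‖C₁ t‖ ^ 2 + ‖C₂ t‖ ^ 2 = 1) :
    |mbCurrent q C₁ C₂ t| ≤ |q| := by
  have him := abs_im_conj_mul_le (C₁ t) (C₂ t)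
  rw [h] at him
  rw [mbCurrent, abs_mul, abs_mul, abs_two]
  nlinarith [abs_nonneg q]

section Gronwall

variable {V V' : ℝ → ℝ} {α β : ℝ}

lemma le_of_deriv_add_mul_le (hα : α ≠ 0) (hV : ∀ t ∈ Ici 0, HasDerivAt V (V' t) t)
    (hdiss : ∀ t ∈ Ici 0, V' t + α * V t ≤ β) {t : ℝ} (ht : 0 ≤ t) :
    V t ≤ V 0 * exp (-α * t) + β / α * (1 - exp (-α * t)) := by
  have hbound := le_gronwallBound_of_liminf_deriv_right_le (f := V) (f' := V') (δ := V 0)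
    (K := -α) (ε := β) (a := 0) (b := t)
    (fun s hs => (hV s hs.1).continuousAt.continuousWithinAt)
    (fun s hs r hr => by simpa only [slope_def_field, div_eq_inv_mul] using
      (hV s hs.1).hasDerivWithinAt.liminf_right_slope_le hr)
    le_rfl (fun s hs => by linarith [hdiss s hs.1]) t ⟨ht, le_rfl⟩
  rw [gronwallBound_of_K_ne_0 (neg_ne_zero.2 hα), sub_zero, div_neg] at hbound
  linarith

lemma eventually_le_of_deriv_add_mul_le (hα : 0 < α)
    (hV : ∀ t ∈ Ici 0, HasDerivAt V (V' t) t) (hdiss : ∀ t ∈ Ici 0, V' t + α * V t ≤ β)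
    {η : ℝ} (hη : 0 < η) : ∀ᶠ t in atTop, V t ≤ β / α + η := by
  have hexp : Tendsto (fun t => exp (-α * t)) atTop (𝓝 0) :=
    tendsto_exp_atBot.comp (tendsto_id.const_mul_atTop_of_neg (neg_lt_zero.2 hα))
  have hlim : Tendsto (fun t => V 0 * exp (-α * t) + β / α * (1 - exp (-α * t)))
      atTop (𝓝 (β / α)) := by
    simpa using (hexp.const_mul (V 0)).add
      ((tendsto_const_nhds (x := (1 : ℝ)).sub hexp).const_mul (β / α))
  filter_upwards [hlim.eventually (gt_mem_nhds (lt_add_of_pos_right _ hη)),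
    eventually_ge_atTop 0] with t hlt ht
  exact (le_of_deriv_add_mul_le hα.ne' hV hdiss ht).trans hlt.le

end Gronwall

section DampedOscillator

lemma mul_le_sq_add_sq_div_of_abs_le {k f M : ℝ} (hk : 0 < k) (x : ℝ) (hf : |f| ≤ M) :
    x * f ≤ k / 4 * x ^ 2 + M ^ 2 / k := by
  have hf2 : f ^ 2 ≤ M ^ 2 := sq_le_sq' (abs_le.1 hf).1 (abs_le.1 hf).2
  have hsplit : k / 4 * x ^ 2 + M ^ 2 / k - x * f
      = ((k * x - 2 * f) ^ 2 + 4 * (M ^ 2 - f ^ 2)) / (4 * k) := by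
    field_simp
    ring
  rw [← sub_nonneg, hsplit]
  exact div_nonneg (add_nonneg (sq_nonneg _) (by linarith)) (by positivity)

def oscLyapunov (Ω ε a b : ℝ) : ℝ :=
  b ^ 2 + Ω ^ 2 * a ^ 2 + ε * (a * b)

variable {Ω σ ε : ℝ}

lemma HasDerivAt.oscLyapunov {A B : ℝ → ℝ} {a' b' t : ℝ} (hA : HasDerivAt A a' t)
    (hB : HasDerivAt B b' t) :
    HasDerivAt (fun s => oscLyapunov Ω ε (A s) (B s))
      (2 * B t * b' + 2 * Ω ^ 2 * A t * a' + ε * (a' * B t + A t * b')) t := by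
  refine (((hB.fun_pow 2).fun_add ((hA.fun_pow 2).const_mul (Ω ^ 2))).fun_add
    ((hA.fun_mul hB).const_mul ε)).congr_deriv ?_
  push_cast
  ring

lemma half_mul_sq_add_sq_le_oscLyapunov (hε₀ : 0 ≤ ε) (hε₁ : ε ≤ 1) (hεΩ : ε ≤ Ω ^ 2)
    (a b : ℝ) : ε / 2 * (a ^ 2 + b ^ 2) ≤ oscLyapunov Ω ε a b := by
  unfold oscLyapunov
  nlinarith [mul_nonneg hε₀ (sq_nonneg (a + b)), mul_nonneg (sub_nonneg.2 hε₁) (sq_nonneg b),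
    mul_nonneg (sub_nonneg.2 hεΩ) (sq_nonneg a)]

lemma oscLyapunov_le (hε₀ : 0 ≤ ε) (hε₁ : ε ≤ 1) (a b : ℝ) :
    oscLyapunov Ω ε a b ≤ (Ω ^ 2 + 2) * (a ^ 2 + b ^ 2) := by
  unfold oscLyapunov
  nlinarith [mul_nonneg hε₀ (sq_nonneg (a - b)), mul_nonneg (sub_nonneg.2 hε₁) (sq_nonneg (a - b)),
    sq_nonneg a, sq_nonneg b]

/-- The cross term `εAB` is what makes the time derivative of the energy coercive in `A`;
the condition on `ε` lets the damping `-σB²` absorb the cross term `-εσAB`. -/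
lemma oscLyapunov_deriv_le (hΩ : Ω ≠ 0) (hσ : 0 < σ) (hε₀ : 0 ≤ ε)
    (hεσ : ε * (2 * Ω ^ 2 + σ ^ 2) ≤ 2 * σ * Ω ^ 2) {M a b f : ℝ} (hf : |f| ≤ M) :
    2 * b * (-Ω ^ 2 * a - σ * b + f) + 2 * Ω ^ 2 * a * b
        + ε * (b * b + a * (-Ω ^ 2 * a - σ * b + f))
      ≤ -(σ / 2 * b ^ 2 + ε * Ω ^ 2 / 4 * a ^ 2) + (2 * M ^ 2 / σ + ε * M ^ 2 / Ω ^ 2) := by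
  have hforce_b := mul_le_sq_add_sq_div_of_abs_le hσ b hf
  have hforce_a := mul_le_sq_add_sq_div_of_abs_le (by positivity : 0 < Ω ^ 2) a hf
  have hcross : ε * σ * -(a * b) ≤ ε * Ω ^ 2 / 2 * a ^ 2 + (σ - ε) * b ^ 2 := by
    rw [← mul_le_mul_iff_right₀ (by positivity : (0 : ℝ) < 2 * Ω ^ 2)]
    nlinarith [mul_nonneg hε₀ (sq_nonneg (Ω ^ 2 * a + σ * b)),
      mul_nonneg (sub_nonneg.2 hεσ) (sq_nonneg b)]
  linear_combination hcross + 2 * hforce_b + mul_le_mul_of_nonneg_left hforce_a hε₀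

theorem exists_absorbing_ball_of_forced_damped_oscillator (hΩ : Ω ≠ 0) (hσ : 0 < σ) (M : ℝ) :
    ∃ R > 0, ∀ A B f : ℝ → ℝ, (∀ t ∈ Ici 0, HasDerivAt A (B t) t) →
      (∀ t ∈ Ici 0, HasDerivAt B (-Ω ^ 2 * A t - σ * B t + f t) t) →
      (∀ t ∈ Ici 0, |f t| ≤ M) → ∀ᶠ t in atTop, A t ^ 2 + B t ^ 2 ≤ R := by
  set ε := min (min 1 (Ω ^ 2)) (2 * σ * Ω ^ 2 / (2 * Ω ^ 2 + σ ^ 2))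
  have hε₀ : 0 < ε := by positivity
  have hε₁ : ε ≤ 1 := (min_le_left _ _).trans (min_le_left _ _)
  have hεΩ : ε ≤ Ω ^ 2 := (min_le_left _ _).trans (min_le_right _ _)
  have hεσ : ε * (2 * Ω ^ 2 + σ ^ 2) ≤ 2 * σ * Ω ^ 2 :=
    (le_div_iff₀ (by positivity)).1 (min_le_right _ _)
  set γ := min (σ / 2) (ε * Ω ^ 2 / 4)
  set α := γ / (Ω ^ 2 + 2)
  set β := 2 * M ^ 2 / σ + ε * M ^ 2 / Ω ^ 2
  have hα : 0 < α := by positivity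
  refine ⟨2 / ε * (β / α + 1), by positivity, fun A B f hA hB hf => ?_⟩
  have hdiss : ∀ t ∈ Ici 0, 2 * B t * (-Ω ^ 2 * A t - σ * B t + f t) + 2 * Ω ^ 2 * A t * B t
      + ε * (B t * B t + A t * (-Ω ^ 2 * A t - σ * B t + f t))
      + α * oscLyapunov Ω ε (A t) (B t) ≤ β := by
    intro t ht
    have hderiv := oscLyapunov_deriv_le hΩ hσ hε₀.le hεσ (a := A t) (b := B t) (hf t ht)
    have hαV : α * oscLyapunov Ω ε (A t) (B t) ≤ γ * (A t ^ 2 + B t ^ 2) := by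
      calc α * oscLyapunov Ω ε (A t) (B t) ≤ α * ((Ω ^ 2 + 2) * (A t ^ 2 + B t ^ 2)) :=
            mul_le_mul_of_nonneg_left (oscLyapunov_le hε₀.le hε₁ _ _) hα.le
        _ = γ * (A t ^ 2 + B t ^ 2) := by rw [← mul_assoc, div_mul_cancel₀ γ (by positivity)]
    nlinarith [min_le_left (σ / 2) (ε * Ω ^ 2 / 4), min_le_right (σ / 2) (ε * Ω ^ 2 / 4),
      sq_nonneg (A t), sq_nonneg (B t)]
  filter_upwards [eventually_le_of_deriv_add_mul_le hα
    (fun t ht => (hA t ht).oscLyapunov (hB t ht)) hdiss one_pos] with t ht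
  have hlow := half_mul_sq_add_sq_le_oscLyapunov (Ω := Ω) hε₀.le hε₁ hεΩ (A t) (B t)
  rw [div_mul_eq_mul_div, le_div_iff₀ hε₀]
  nlinarith

end DampedOscillator

theorem mb_absorbing_ball_general
    (Ω σ c q : ℝ) (hΩ : 0 < Ω) (hσ : 0 < σ) :
    ∃ d₂ : ℝ, 0 < d₂ ∧
      ∀ (hbar ω₁ ω₂ : ℝ) (Ap A B : ℝ → ℝ) (C₁ C₂ : ℝ → ℂ),
        0 < hbar → ω₁ < ω₂ → ContinuousOn Ap (Set.Ici 0) →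
        IsMBSolution Ω σ c hbar ω₁ ω₂ q Ap A B C₁ C₂ →
        (∀ t ≥ (0 : ℝ), ‖C₁ t‖ ^ 2 + ‖C₂ t‖ ^ 2 = 1) →
        ∃ t₀ ≥ (0 : ℝ), ∀ t ≥ t₀, A t ^ 2 + B t ^ 2 ≤ 2 * d₂ := by
  obtain ⟨R, hR, habsorb⟩ :=
    exists_absorbing_ball_of_forced_damped_oscillator hΩ.ne' hσ |c * q|
  refine ⟨R / 2, half_pos hR, fun hbar ω₁ ω₂ Ap A B C₁ C₂ _ _ _ sol hnorm => ?_⟩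
  have hforce : ∀ t ∈ Ici 0, |c * mbCurrent q C₁ C₂ t| ≤ |c * q| := fun t ht => by
    rw [abs_mul, abs_mul]
    exact mul_le_mul_of_nonneg_left (abs_mbCurrent_le (hnorm t ht)) (abs_nonneg c)
  obtain ⟨t₁, ht₁⟩ := eventually_atTop.1 (habsorb A B _ sol.hA sol.hB hforce)
  refine ⟨max t₁ 0, le_max_right _ _, fun t ht => ?_⟩
  rw [mul_div_cancel₀ R two_ne_zero]
  exact ht₁ t (le_of_max_le_left ht)

/-- Absorbing ball for the Maxwell amplitudes: there is a radius, depending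
only on `Ω, σ, c, q`, which every solution trajectory eventually enters and
never leaves. -/
theorem mb_absorbing_ball
    (Ω σ c q : ℝ) (hΩ : 0 < Ω) (hσ : 0 < σ) (hc : 0 < c) (hq : 0 < q) :
    ∃ d₂ : ℝ, 0 < d₂ ∧
      ∀ (hbar ω₁ ω₂ : ℝ) (Ap A B : ℝ → ℝ) (C₁ C₂ : ℝ → ℂ),
        0 < hbar → ω₁ < ω₂ → ContinuousOn Ap (Set.Ici 0) →
        IsMBSolution Ω σ c hbar ω₁ ω₂ q Ap A B C₁ C₂ →
        (∀ t ≥ (0 : ℝ), ‖C₁ t‖ ^ 2 + ‖C₂ t‖ ^ 2 = 1) →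
        ∃ t₀ ≥ (0 : ℝ), ∀ t ≥ t₀, A t ^ 2 + B t ^ 2 ≤ 2 * d₂ :=
  mb_absorbing_ball_general Ω σ c q hΩ hσ
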